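/- Let P be an irreducible Markov chain on a finite state space S with stationary distribution d^π, let r(s,a) be a reward function, and suppose everything depends smoothly on a parameter θ. If the differential action-value Q(s) := Q_diff^π(s, π(s)) satisfies the Poisson equation Q(s) = r(s, π(s)) − ρ(θ) + ∑_{s'} P^π(s'|s) Q(s') and all quantities are differentiable in θ, then ∇_θ ρ(θ) = ∑_s d^π(s) [∇_θ r(s,π(s)) + ∑_{s'} ∇_θ P^π(s'|s) · Q(s')], i.e., the stationary-distribution-weighted derivative of the Poisson equation yields the policy gradient with no ∇_θ d^π term. -/

import Mathlib

/-!
Differentiating the Poisson equation `Q = r - ρ • 1 + P *ᵥ Q` gives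
`Q' = r' - ρ' • 1 + P' *ᵥ Q + P *ᵥ Q'`. Pairing with the stationary distribution `d`, the term
`d ⬝ᵥ (P *ᵥ Q') = (d ᵥ* P) ⬝ᵥ Q' = d ⬝ᵥ Q'` cancels the left-hand side, and `d ⬝ᵥ 1 = 1` leaves
`ρ' = d ⬝ᵥ (r' + P' *ᵥ Q)`: the unknown derivative of `d` never enters.
-/

open Finset Matrix

theorem Matrix.dotProduct_mulVec_of_vecMul_eq_self {n R : Type*} [Fintype n] [NonUnitalSemiring R]
    {d : n → R} {M : Matrix n n R} (hd : d ᵥ* M = d) (v : n → R) :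
    d ⬝ᵥ (M *ᵥ v) = d ⬝ᵥ v := by
  rw [dotProduct_mulVec, hd]

theorem HasDerivAt.mulVec_apply {m n 𝕜 : Type*} [Fintype n] [NontriviallyNormedField 𝕜]
    {M : 𝕜 → Matrix m n 𝕜} {v : 𝕜 → n → 𝕜} {M' : Matrix m n 𝕜} {v' : n → 𝕜} {t : 𝕜}
    (hM : ∀ i j, HasDerivAt (fun t => M t i j) (M' i j) t)
    (hv : ∀ j, HasDerivAt (fun t => v t j) (v' j) t) (i : m) :
    HasDerivAt (fun t => (M t *ᵥ v t) i) ((M' *ᵥ v t + M t *ᵥ v') i) t := by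
  simpa only [mulVec, dotProduct, Pi.add_apply, ← sum_add_distrib] using
    HasDerivAt.fun_sum fun j _ => (hM i j).fun_mul (hv j)

theorem poisson_equation_hasDerivAt {S : Type*} [Fintype S]
    {P : ℝ → Matrix S S ℝ} {r Q : ℝ → S → ℝ} {ρ : ℝ → ℝ} {θ₀ ρ' : ℝ} {Q' r' : S → ℝ}
    {P' : Matrix S S ℝ}
    (hPoisson : ∀ θ s, Q θ s = r θ s - ρ θ + (P θ *ᵥ Q θ) s)
    (hρ : HasDerivAt ρ ρ' θ₀)
    (hQ : ∀ s, HasDerivAt (fun θ => Q θ s) (Q' s) θ₀)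
    (hr : ∀ s, HasDerivAt (fun θ => r θ s) (r' s) θ₀)
    (hP : ∀ s s', HasDerivAt (fun θ => P θ s s') (P' s s') θ₀) :
    Q' = r' - ρ' • 1 + P' *ᵥ Q θ₀ + P θ₀ *ᵥ Q' := by
  funext s
  have hRHS := ((hr s).fun_sub hρ).fun_add (HasDerivAt.mulVec_apply hP hQ s)
  rw [show (fun θ => r θ s - ρ θ + (P θ *ᵥ Q θ) s) = fun θ => Q θ s from
    funext fun θ => (hPoisson θ s).symm] at hRHS
  simpa [add_assoc] using (hQ s).unique hRHS

theorem gradient_eq_dotProduct_of_stationary {S : Type*} [Fintype S]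
    {P P' : Matrix S S ℝ} {d Q Q' r' : S → ℝ} {ρ' : ℝ}
    (hd_sum : ∑ s, d s = 1) (hd_stat : d ᵥ* P = d)
    (hQ' : Q' = r' - ρ' • 1 + P' *ᵥ Q + P *ᵥ Q') :
    ρ' = d ⬝ᵥ (r' + P' *ᵥ Q) := by
  have hpair := congrArg (d ⬝ᵥ ·) hQ'
  simp only [dotProduct_add, dotProduct_sub, dotProduct_smul, dotProduct_one, hd_sum,
    dotProduct_mulVec_of_vecMul_eq_self hd_stat] at hpair
  rw [dotProduct_add]
  linarith [smul_eq_mul ρ' (1 : ℝ)]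

theorem deterministic_policy_gradient_finite_general {S : Type*} [Fintype S]
    (P : ℝ → S → S → ℝ) (r : ℝ → S → ℝ) (ρ : ℝ → ℝ) (Q : ℝ → S → ℝ)
    (d : S → ℝ) (θ₀ : ℝ)
    (ρ' : ℝ) (Q' r' : S → ℝ) (P' : S → S → ℝ)
    (hd_sum : ∑ s, d s = 1)
    (hd_stat : ∀ s', ∑ s, d s * P θ₀ s s' = d s')
    (hPoisson : ∀ θ s, Q θ s = r θ s - ρ θ + ∑ s', P θ s s' * Q θ s')
    (hρ : HasDerivAt ρ ρ' θ₀)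
    (hQ : ∀ s, HasDerivAt (fun θ => Q θ s) (Q' s) θ₀)
    (hr : ∀ s, HasDerivAt (fun θ => r θ s) (r' s) θ₀)
    (hP : ∀ s s', HasDerivAt (fun θ => P θ s s') (P' s s') θ₀) :
    ρ' = ∑ s, d s * (r' s + ∑ s', P' s s' * Q θ₀ s') := by
  have hQ' := poisson_equation_hasDerivAt (P := fun θ => (P θ : Matrix S S ℝ)) (P' := P')
    hPoisson hρ hQ hr hP
  exact gradient_eq_dotProduct_of_stationary hd_sum (funext hd_stat) hQ'

theorem deterministic_policy_gradient_finite {S : Type*} [Fintype S]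
    (P : ℝ → S → S → ℝ) (r : ℝ → S → ℝ) (ρ : ℝ → ℝ) (Q : ℝ → S → ℝ)
    (d : S → ℝ) (θ₀ : ℝ)
    (ρ' : ℝ) (Q' r' : S → ℝ) (P' : S → S → ℝ)
    (hd_nonneg : ∀ s, 0 ≤ d s)
    (hd_sum : ∑ s, d s = 1)
    (hd_stat : ∀ s', ∑ s, d s * P θ₀ s s' = d s')
    (hPoisson : ∀ θ s, Q θ s = r θ s - ρ θ + ∑ s', P θ s s' * Q θ s')
    (hρ : HasDerivAt ρ ρ' θ₀)
    (hQ : ∀ s, HasDerivAt (fun θ => Q θ s) (Q' s) θ₀)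
    (hr : ∀ s, HasDerivAt (fun θ => r θ s) (r' s) θ₀)
    (hP : ∀ s s', HasDerivAt (fun θ => P θ s s') (P' s s') θ₀) :
    ρ' = ∑ s, d s * (r' s + ∑ s', P' s s' * Q θ₀ s') :=
  deterministic_policy_gradient_finite_general P r ρ Q d θ₀ ρ' Q' r' P' hd_sum hd_stat hPoisson hρ
    hQ hr hP
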